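/- For every strictly increasing sequence N_1 < N_2 < N_3 < ... of natural numbers there exists a residual set D ⊂ PW^1_π (the complement of a set of first category in the Banach space PW^1_π) such that limsup_{k→∞} sup_{t∈ℝ} |(S_{N_k} f)(t)| = ∞ for every f ∈ D. In particular, there exists no universal subsequence {N_k} along which the Shannon series converges uniformly on ℝ for every f ∈ PW^1_π. -/

import Mathlib

/-!
For fixed `N` and `t`, `f ↦ S_N f(t)` is a continuous linear functional on
`PW^1_π ≅ L^1([-π, π])`, and `sup_t ‖S_N(·)(t)‖ → ∞`: the normalised indicator of a short
interval `[π - δ, π]` has transform close to `(-1)^n / 2π` at the integers `|n| ≤ N`, so its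
Shannon sum at `t = N + 1/2` is close to `± (1/2π²) ∑_{|n| ≤ N} 1/(N + 1/2 - n)`, a harmonic sum.
The Baire-category form of the Banach–Steinhaus theorem, applied to the tails `k ≥ m` of the
subsequence, gives a residual set of divergence. Since every `f ∈ PW^1_π` is bounded, uniform
convergence along a subsequence would keep its partial sums bounded.
-/

open MeasureTheory Filter Topology Real Complex
open scoped ENNReal NNReal

noncomputable section

/-- The normalized sinc function `sin(πx)/(πx)` (with value `1` at `x = 0`). -/
def sincπ (x : ℝ) : ℝ := if x = 0 then 1 else Real.sin (π * x) / (π * x)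

/-- `f` belongs to the Paley–Wiener space `PW^p_σ`: it is the inverse Fourier
transform of some `g ∈ L^p([-σ, σ])`. -/
def IsPW (p : ℝ≥0∞) (σ : ℝ) (f : ℂ → ℂ) : Prop :=
  ∃ g : ℝ → ℂ, MemLp g p (volume.restrict (Set.Icc (-σ) σ)) ∧
    ∀ z : ℂ, f z = ((1 / (2 * π) : ℝ) : ℂ) *
      ∫ ω in Set.Icc (-σ) σ, g ω * Complex.exp (Complex.I * (ω : ℂ) * z)

/-- The symmetric partial sum of degree `N` of the Shannon sampling series. -/
def shannonSum (f : ℂ → ℂ) (N : ℕ) (t : ℝ) : ℂ :=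
  ∑ n ∈ Finset.Icc (-(N : ℤ)) (N : ℤ), f (n : ℂ) * ((sincπ (t - n) : ℝ) : ℂ)

/-- The frequency-domain representation of the Banach space `PW^1_π`:
it is isometrically isomorphic to `L^1([-π,π])` via `g ↦ f`,
`f(z) = (1/2π)∫_{-π}^{π} g(ω) e^{iωz} dω`. -/
abbrev PW1Space : Type := Lp ℂ 1 (volume.restrict (Set.Icc (-π) (π : ℝ)))

/-- The Paley–Wiener function in `PW^1_π` attached to `g ∈ L^1([-π,π])`. -/
def pwFun (g : PW1Space) (z : ℂ) : ℂ :=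
  ((1 / (2 * π) : ℝ) : ℂ) * ∫ ω in Set.Icc (-π) π, g ω * Complex.exp (Complex.I * (ω : ℂ) * z)

section BanachSteinhaus

variable {𝕜 E F : Type*} [NontriviallyNormedField 𝕜]
  [SeminormedAddCommGroup E] [NormedSpace 𝕜 E] [SeminormedAddCommGroup F] [NormedSpace 𝕜 F]

theorem ContinuousLinearMap.interior_setOf_forall_norm_apply_le_eq_empty {ι : Type*}
    {T : ι → E →L[𝕜] F} (hT : ⨆ i, (‖T i‖₊ : ℝ≥0∞) = ⊤) (c : ℝ) :
    interior {x | ∀ i, ‖T i x‖ ≤ c} = ∅ := by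
  refine Set.eq_empty_iff_forall_notMem.mpr fun x₀ hx₀ => ?_
  obtain ⟨r, hr, hball⟩ := Metric.mem_nhds_iff.mp (mem_interior_iff_mem_nhds.mp hx₀)
  obtain ⟨k, hk⟩ := NormedField.exists_one_lt_norm 𝕜
  have hT_le (i : ι) : ‖T i‖ ≤ 2 * |c| * ‖k‖ / r := by
    refine ContinuousLinearMap.opNorm_le_of_shell hr (by positivity) hk fun z hz hzr => ?_
    have hsum : ‖T i (x₀ + z)‖ ≤ c := hball (by simpa [dist_eq_norm] using hzr) i
    have hx₀ : ‖T i x₀‖ ≤ c := hball (Metric.mem_ball_self hr) i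
    have hzk : 1 ≤ ‖k‖ * ‖z‖ / r := by
      rw [le_div_iff₀ hr, one_mul]; rwa [div_le_iff₀ (one_pos.trans hk), mul_comm] at hz
    calc ‖T i z‖ = ‖T i (x₀ + z) - T i x₀‖ := by rw [map_add, add_sub_cancel_left]
      _ ≤ 2 * |c| := by linarith [norm_sub_le (T i (x₀ + z)) (T i x₀), le_abs_self c]
      _ ≤ 2 * |c| * (‖k‖ * ‖z‖ / r) := le_mul_of_one_le_right (by positivity) hzk
      _ = 2 * |c| * ‖k‖ / r * ‖z‖ := by ring
  refine ENNReal.ofReal_ne_top (r := 2 * |c| * ‖k‖ / r) (top_unique (hT ▸ iSup_le fun i => ?_))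
  rw [← ENNReal.ofReal_coe_nnreal, coe_nnnorm]
  exact ENNReal.ofReal_le_ofReal (hT_le i)

theorem banach_steinhaus_residual {ι : Type*} [CompleteSpace E] {T : ι → E →L[𝕜] F}
    (hT : ⨆ i, (‖T i‖₊ : ℝ≥0∞) = ⊤) : ∀ᶠ x in residual E, ⨆ i, (‖T i x‖₊ : ℝ≥0∞) = ⊤ := by
  have hclosed (c : ℕ) : IsClosed {x | ∀ i, ‖T i x‖ ≤ c} := by
    simpa only [Set.ofPred_forall] using
      isClosed_iInter fun i => isClosed_le (T i).continuous.norm continuous_const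
  have hres (c : ℕ) : {x | ∀ i, ‖T i x‖ ≤ c}ᶜ ∈ residual E :=
    residual_of_dense_open (hclosed c).isOpen_compl (interior_eq_empty_iff_dense_compl.mp
      (ContinuousLinearMap.interior_setOf_forall_norm_apply_le_eq_empty hT c))
  filter_upwards [countable_iInter_mem.mpr hres] with x hx
  refine top_unique (le_of_forall_lt fun C hC => ?_)
  obtain ⟨c, hc⟩ := ENNReal.exists_nat_gt hC.ne
  obtain ⟨i, hi⟩ : ∃ i, (c : ℝ) < ‖T i x‖ := by simpa using Set.mem_iInter.mp hx c
  exact (hc.trans (by exact_mod_cast hi)).trans_le (le_iSup _ i)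

theorem banach_steinhaus_residual_limsup {ι : Type*} [CompleteSpace E] {T : ℕ → ι → E →L[𝕜] F}
    (hT : limsup (fun k => ⨆ i, (‖T k i‖₊ : ℝ≥0∞)) atTop = ⊤) :
    ∀ᶠ x in residual E, limsup (fun k => ⨆ i, (‖T k i x‖₊ : ℝ≥0∞)) atTop = ⊤ := by
  simp only [limsup_eq_iInf_iSup_of_nat, iInf_eq_top] at hT ⊢
  refine eventually_countable_forall.mpr fun m => ?_
  have hTm : ⨆ p : {k // m ≤ k} × ι, (‖T p.1 p.2‖₊ : ℝ≥0∞) = ⊤ := by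
    rw [iSup_prod, iSup_subtype]; exact hT m
  filter_upwards [banach_steinhaus_residual hTm] with x hx
  rwa [iSup_prod, iSup_subtype] at hx

end BanachSteinhaus

theorem limsup_iSup_nnnorm_ne_top_of_tendsto {α E : Type*} [SeminormedAddCommGroup E]
    {f : α → E} {u : ℕ → α → E} (hf : ⨆ t, (‖f t‖₊ : ℝ≥0∞) ≠ ⊤)
    (hu : Tendsto (fun k => ⨆ t, (‖f t - u k t‖₊ : ℝ≥0∞)) atTop (𝓝 0)) :
    limsup (fun k => ⨆ t, (‖u k t‖₊ : ℝ≥0∞)) atTop ≠ ⊤ := by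
  have hle (k : ℕ) : ⨆ t, (‖u k t‖₊ : ℝ≥0∞) ≤
      (⨆ t, (‖f t‖₊ : ℝ≥0∞)) + ⨆ t, (‖f t - u k t‖₊ : ℝ≥0∞) := by
    refine iSup_le fun t => ?_
    calc (‖u k t‖₊ : ℝ≥0∞) ≤ ‖f t‖₊ + ‖f t - u k t‖₊ := by
          exact_mod_cast nnnorm_le_nnnorm_add_nnnorm_sub (f t) (u k t)
      _ ≤ _ := add_le_add (le_iSup (fun t => (‖f t‖₊ : ℝ≥0∞)) t)
          (le_iSup (fun t => (‖f t - u k t‖₊ : ℝ≥0∞)) t)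
  have hlim : limsup (fun k => (⨆ t, (‖f t‖₊ : ℝ≥0∞)) + ⨆ t, (‖f t - u k t‖₊ : ℝ≥0∞)) atTop =
      ⨆ t, (‖f t‖₊ : ℝ≥0∞) := by
    simpa using (tendsto_const_nhds.add hu).limsup_eq
  exact ne_top_of_le_ne_top hf (hlim ▸ limsup_le_limsup (Eventually.of_forall hle))

theorem abs_sincπ_le (x : ℝ) : |sincπ x| ≤ 1 := by
  rw [sincπ]
  split_ifs with h
  · simp
  · rw [abs_div, div_le_one (abs_pos.mpr (mul_ne_zero Real.pi_ne_zero h))]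
    exact Real.abs_sin_le_abs

theorem cos_mul_sincπ_sub_intCast (t : ℝ) (n : ℤ) (h : t - n ≠ 0) :
    Real.cos (π * n) * sincπ (t - n) = Real.sin (π * t) / (π * (t - n)) := by
  have hsin : Real.sin (π * n) = 0 := by rw [mul_comm]; exact Real.sin_int_mul_pi n
  have hcos_sq : Real.cos (π * n) ^ 2 = 1 := by simpa [hsin] using Real.sin_sq_add_cos_sq (π * n)
  rw [sincπ, if_neg h, mul_sub, Real.sin_sub, hsin, mul_zero, sub_zero, ← mul_div_assoc]
  congr 1
  linear_combination Real.sin (π * t) * hcos_sq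

theorem nat_add_half_sub_intCast_ne_zero (N : ℕ) (n : ℤ) : (N : ℝ) + 1 / 2 - n ≠ 0 := by
  intro h
  have : ((2 * N + 1 - 2 * n : ℤ) : ℝ) = 0 := by push_cast; linear_combination 2 * h
  exact_mod_cast (show 2 * (N : ℤ) + 1 - 2 * n ≠ 0 by omega) (by exact_mod_cast this)

theorem abs_sin_pi_mul_nat_add_half (N : ℕ) : |Real.sin (π * (N + 1 / 2))| = 1 := by
  rw [show π * (N + 1 / 2) = N * π + π / 2 by ring, Real.sin_add_pi_div_two, Real.cos_nat_mul_pi,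
    abs_pow, abs_neg, abs_one, one_pow]

theorem sum_range_inv_succ_le_sum_inv_half_sub (N : ℕ) :
    ∑ i ∈ Finset.range (2 * N + 1), 1 / ((i : ℝ) + 1) ≤
      ∑ n ∈ Finset.Icc (-(N : ℤ)) N, 1 / ((N : ℝ) + 1 / 2 - n) := by
  have hreindex : ∑ n ∈ Finset.Icc (-(N : ℤ)) N, 1 / ((N : ℝ) + 1 / 2 - n) =
      ∑ i ∈ Finset.range (2 * N + 1), 1 / ((i : ℝ) + 1 / 2) := by
    refine Finset.sum_nbij' (fun n => ((N : ℤ) - n).toNat) (fun i => (N : ℤ) - i)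
      (fun n hn => ?_) (fun i hi => ?_) (fun n hn => ?_) (fun i _ => by simp) (fun n hn => ?_)
    · rw [Finset.mem_Icc] at hn; rw [Finset.mem_range]; omega
    · rw [Finset.mem_range] at hi; rw [Finset.mem_Icc]; omega
    · rw [Finset.mem_Icc] at hn; omega
    · rw [Finset.mem_Icc] at hn
      rw [show (((N : ℤ) - n).toNat : ℝ) = ((N : ℤ) - n : ℤ) by
        exact_mod_cast Int.toNat_of_nonneg (by omega)]
      push_cast; ring_nf
  rw [hreindex]
  gcongr
  norm_num

theorem sum_cos_mul_sincπ_nat_add_half_sub (N : ℕ) :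
    ∑ n ∈ Finset.Icc (-(N : ℤ)) N, Real.cos (π * n) * sincπ (N + 1 / 2 - n) =
      Real.sin (π * (N + 1 / 2)) / π *
        ∑ n ∈ Finset.Icc (-(N : ℤ)) N, 1 / ((N : ℝ) + 1 / 2 - n) := by
  rw [Finset.mul_sum]
  refine Finset.sum_congr rfl fun n _ => ?_
  rw [cos_mul_sincπ_sub_intCast _ _ (nat_add_half_sub_intCast_ne_zero N n)]
  field_simp

theorem sum_range_inv_succ_le_abs_sum_cos_mul_sincπ (N : ℕ) :
    ∑ i ∈ Finset.range (2 * N + 1), 1 / ((i : ℝ) + 1) ≤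
      π * |∑ n ∈ Finset.Icc (-(N : ℤ)) N, Real.cos (π * n) * sincπ (N + 1 / 2 - n)| := by
  have hpos : 0 ≤ ∑ n ∈ Finset.Icc (-(N : ℤ)) N, 1 / ((N : ℝ) + 1 / 2 - n) := by
    refine Finset.sum_nonneg fun n hn => ?_
    have : (n : ℝ) ≤ N := by exact_mod_cast (Finset.mem_Icc.mp hn).2
    rw [one_div_nonneg]; linarith
  rw [sum_cos_mul_sincπ_nat_add_half_sub, abs_mul, abs_div, abs_sin_pi_mul_nat_add_half,
    abs_of_pos Real.pi_pos, abs_of_nonneg hpos, ← mul_assoc, mul_one_div_cancel Real.pi_ne_zero,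
    one_mul]
  exact sum_range_inv_succ_le_sum_inv_half_sub N

theorem norm_exp_I_mul_mul (ω x : ℝ) : ‖Complex.exp (I * ω * x)‖ = 1 := by
  rw [mul_assoc, ← Complex.ofReal_mul, mul_comm, Complex.norm_exp_ofReal_mul_I]

theorem norm_exp_I_mul_mul_sub_le (ω ω' x : ℝ) :
    ‖Complex.exp (I * ω * x) - Complex.exp (I * ω' * x)‖ ≤ |ω - ω'| * |x| := by
  have hfactor : Complex.exp (I * ω * x) - Complex.exp (I * ω' * x) =
      Complex.exp (I * ω' * x) * (Complex.exp (I * ((ω - ω') * x : ℝ)) - 1) := by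
    rw [mul_sub, mul_one, ← Complex.exp_add]; push_cast; ring_nf
  rw [hfactor, norm_mul, norm_exp_I_mul_mul, one_mul, ← abs_mul]
  exact Real.norm_exp_I_mul_ofReal_sub_one_le

theorem exp_I_mul_pi_mul_intCast (n : ℤ) :
    Complex.exp (I * π * (n : ℝ)) = (Real.cos (π * n) : ℂ) := by
  rw [show I * π * (n : ℝ) = ((π * n : ℝ) : ℂ) * I by push_cast; ring, Complex.exp_mul_I,
    ← Complex.ofReal_cos, ← Complex.ofReal_sin, mul_comm π, Real.sin_int_mul_pi]
  simp

namespace PaleyWiener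

local notation "μπ" => volume.restrict (Set.Icc (-π) π)

theorem integrable_mul_exp (g : PW1Space) (x : ℝ) :
    Integrable (fun ω : ℝ => g ω * Complex.exp (I * ω * x)) μπ := by
  refine (L1.integrable_coeFn g).mul_bdd (c := 1) ?_ (Eventually.of_forall fun ω => ?_)
  · exact (by fun_prop : Continuous fun ω : ℝ => Complex.exp (I * ω * x)).aestronglyMeasurable
  · exact (norm_exp_I_mul_mul ω x).le

theorem pwFun_add (g h : PW1Space) (x : ℝ) : pwFun (g + h) x = pwFun g x + pwFun h x := by
  rw [pwFun, pwFun, pwFun, ← mul_add,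
    ← integral_add (integrable_mul_exp g x) (integrable_mul_exp h x)]
  congr 1
  refine integral_congr_ae ?_
  filter_upwards [Lp.coeFn_add g h] with ω hω
  rw [hω, Pi.add_apply, add_mul]

theorem pwFun_smul (a : ℂ) (g : PW1Space) (x : ℝ) : pwFun (a • g) x = a * pwFun g x := by
  have hae : (fun ω : ℝ => (a • g) ω * Complex.exp (I * ω * x))
      =ᵐ[μπ] fun ω => a * (g ω * Complex.exp (I * ω * x)) := by
    filter_upwards [Lp.coeFn_smul a g] with ω hω
    rw [hω, Pi.smul_apply, smul_eq_mul, mul_assoc]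
  rw [pwFun, pwFun, integral_congr_ae hae, integral_const_mul, mul_left_comm]

theorem norm_pwFun_le (g : PW1Space) (x : ℝ) : ‖pwFun g x‖ ≤ 1 / (2 * π) * ‖g‖ := by
  rw [pwFun, norm_mul, Complex.norm_real, Real.norm_of_nonneg (by positivity),
    L1.norm_eq_integral_norm]
  gcongr
  refine (norm_integral_le_integral_norm _).trans_eq (integral_congr_ae ?_)
  refine Eventually.of_forall fun ω => ?_
  simp only [norm_mul, norm_exp_I_mul_mul, mul_one]

def evalCLM (x : ℝ) : PW1Space →L[ℂ] ℂ :=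
  LinearMap.mkContinuous
    { toFun := fun g => pwFun g x
      map_add' := fun g h => pwFun_add g h x
      map_smul' := fun a g => pwFun_smul a g x }
    (1 / (2 * π)) fun g => norm_pwFun_le g x

theorem evalCLM_apply (x : ℝ) (g : PW1Space) : evalCLM x g = pwFun g x := rfl

def shannonCLM (N : ℕ) (t : ℝ) : PW1Space →L[ℂ] ℂ :=
  ∑ n ∈ Finset.Icc (-(N : ℤ)) N, (sincπ (t - n) : ℂ) • evalCLM n

theorem shannonCLM_apply (N : ℕ) (t : ℝ) (g : PW1Space) :
    shannonCLM N t g = shannonSum (pwFun g) N t := by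
  simp only [shannonCLM, shannonSum, FunLike.coe_sum, Finset.sum_apply,
    FunLike.coe_smul, Pi.smul_apply, evalCLM_apply, smul_eq_mul, mul_comm,
    Complex.ofReal_intCast]

def window (δ : ℝ) : PW1Space :=
  indicatorConstLp 1 measurableSet_Icc (measure_ne_top _ (Set.Icc (π - δ) π)) ((δ⁻¹ : ℝ) : ℂ)

variable {δ : ℝ}

theorem volume_real_Icc_pi_sub (hδ : 0 ≤ δ) : volume.real (Set.Icc (π - δ) π) = δ := by
  rw [Real.volume_real_Icc_of_le (by linarith), sub_sub_cancel]

theorem Icc_pi_sub_subset (hδ : δ ≤ 2 * π) : Set.Icc (π - δ) π ⊆ Set.Icc (-π) π :=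
  Set.Icc_subset_Icc_left (by linarith)

theorem norm_window (hδ : 0 < δ) (hδ' : δ ≤ 2 * π) : ‖window δ‖ = 1 := by
  rw [window, norm_indicatorConstLp one_ne_zero ENNReal.one_ne_top, measureReal_restrict_apply
    measurableSet_Icc, Set.inter_eq_self_of_subset_left (Icc_pi_sub_subset hδ'),
    volume_real_Icc_pi_sub hδ.le, Complex.norm_real, Real.norm_of_nonneg (inv_pos.mpr hδ).le]
  simp [hδ.ne']

theorem pwFun_window (hδ : δ ≤ 2 * π) (x : ℝ) :
    pwFun (window δ) x = ((1 / (2 * π) : ℝ) : ℂ) *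
      ∫ ω in Set.Icc (π - δ) π, ((δ⁻¹ : ℝ) : ℂ) * Complex.exp (I * ω * x) := by
  have hae : (fun ω : ℝ => window δ ω * Complex.exp (I * ω * x)) =ᵐ[μπ]
      (Set.Icc (π - δ) π).indicator fun ω => ((δ⁻¹ : ℝ) : ℂ) * Complex.exp (I * ω * x) := by
    filter_upwards [indicatorConstLp_coeFn (p := 1) (μ := μπ) (s := Set.Icc (π - δ) π)
      (hs := measurableSet_Icc) (hμs := measure_ne_top _ _) (c := ((δ⁻¹ : ℝ) : ℂ))] with ω hω
    rw [window, hω]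
    by_cases hmem : ω ∈ Set.Icc (π - δ) π <;> simp [hmem]
  rw [pwFun, integral_congr_ae hae, integral_indicator measurableSet_Icc,
    Measure.restrict_restrict measurableSet_Icc,
    Set.inter_eq_self_of_subset_left (Icc_pi_sub_subset hδ)]

theorem norm_pwFun_window_sub_le (hδ : 0 < δ) (hδ' : δ ≤ 2 * π) (x : ℝ) :
    ‖pwFun (window δ) x - ((1 / (2 * π) : ℝ) : ℂ) * Complex.exp (I * π * x)‖ ≤
      δ * |x| / (2 * π) := by
  set s := Set.Icc (π - δ) π
  have hs : volume s < ⊤ := measure_Icc_lt_top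
  have hconst : ∫ ω in s, ((δ⁻¹ : ℝ) : ℂ) * Complex.exp (I * π * x) = Complex.exp (I * π * x) := by
    rw [setIntegral_const, volume_real_Icc_pi_sub hδ.le, real_smul, ← mul_assoc,
      ← Complex.ofReal_mul, mul_inv_cancel₀ hδ.ne', Complex.ofReal_one, one_mul]
  have hpoint : ∀ ω ∈ s,
      ‖((δ⁻¹ : ℝ) : ℂ) * Complex.exp (I * ω * x) - ((δ⁻¹ : ℝ) : ℂ) * Complex.exp (I * π * x)‖ ≤
        δ⁻¹ * (δ * |x|) := by
    intro ω hω
    rw [← mul_sub, norm_mul, Complex.norm_real, Real.norm_of_nonneg (inv_pos.mpr hδ).le]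
    gcongr
    have hωπ : |ω - π| ≤ δ := abs_le.mpr ⟨by linarith [hω.1], by linarith [hω.2]⟩
    exact (norm_exp_I_mul_mul_sub_le ω π x).trans (by gcongr)
  calc ‖pwFun (window δ) x - ((1 / (2 * π) : ℝ) : ℂ) * Complex.exp (I * π * x)‖
      = 1 / (2 * π) * ‖∫ ω in s, (((δ⁻¹ : ℝ) : ℂ) * Complex.exp (I * ω * x) -
          ((δ⁻¹ : ℝ) : ℂ) * Complex.exp (I * π * x))‖ := by
        rw [integral_sub ((by fun_prop : Continuous fun ω : ℝ => ((δ⁻¹ : ℝ) : ℂ) *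
          Complex.exp (I * ω * x)).integrableOn_Icc) (integrableOn_const hs.ne), hconst,
          pwFun_window hδ', ← mul_sub, norm_mul, Complex.norm_real,
          Real.norm_of_nonneg (by positivity)]
    _ ≤ 1 / (2 * π) * (δ⁻¹ * (δ * |x|) * volume.real s) := by
        gcongr; exact norm_setIntegral_le_of_norm_le_const hs hpoint
    _ = δ * |x| / (2 * π) := by
        rw [volume_real_Icc_pi_sub hδ.le]; field_simp

theorem norm_shannonSum_window_sub_le (hδ : 0 < δ) (hδ' : δ ≤ 2 * π) (N : ℕ) (t : ℝ) :
    ‖shannonSum (pwFun (window δ)) N t - ((1 / (2 * π) : ℝ) : ℂ) *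
        ((∑ n ∈ Finset.Icc (-(N : ℤ)) N, Real.cos (π * n) * sincπ (t - n) : ℝ) : ℂ)‖ ≤
      (2 * N + 1) * (δ * N / (2 * π)) := by
  have hterm : ∀ n ∈ Finset.Icc (-(N : ℤ)) N,
      ‖(pwFun (window δ) (n : ℝ) - ((1 / (2 * π) : ℝ) : ℂ) * Real.cos (π * n)) * sincπ (t - n)‖ ≤
        δ * N / (2 * π) := by
    intro n hn
    have hn' : |(n : ℝ)| ≤ N := abs_le.mpr (by rw [Finset.mem_Icc] at hn; exact_mod_cast hn)
    rw [norm_mul, Complex.norm_real, ← exp_I_mul_pi_mul_intCast]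
    calc _ ≤ ‖pwFun (window δ) (n : ℝ) - ((1 / (2 * π) : ℝ) : ℂ) * Complex.exp (I * π * (n : ℝ))‖ :=
          mul_le_of_le_one_right (norm_nonneg _) (abs_sincπ_le _)
      _ ≤ δ * |(n : ℝ)| / (2 * π) := norm_pwFun_window_sub_le hδ hδ' n
      _ ≤ δ * N / (2 * π) := by gcongr
  have hcard : ((Finset.Icc (-(N : ℤ)) N).card : ℝ) = 2 * N + 1 := by
    rw [Int.card_Icc, show (N : ℤ) + 1 - -N = ((2 * N + 1 : ℕ) : ℤ) by push_cast; ring,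
      Int.toNat_natCast]
    push_cast; ring
  calc _ = ‖∑ n ∈ Finset.Icc (-(N : ℤ)) N,
        (pwFun (window δ) (n : ℝ) - ((1 / (2 * π) : ℝ) : ℂ) * Real.cos (π * n)) *
          sincπ (t - n)‖ := by
        rw [shannonSum, Complex.ofReal_sum, Finset.mul_sum, ← Finset.sum_sub_distrib]
        congr 1; refine Finset.sum_congr rfl fun n _ => ?_
        push_cast; ring
    _ ≤ _ := (norm_sum_le _ _).trans (Finset.sum_le_card_nsmul _ _ _ hterm)
    _ = _ := by rw [nsmul_eq_mul, hcard]

theorem le_opNorm_shannonCLM (N : ℕ) :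
    1 / (2 * π ^ 2) * ∑ i ∈ Finset.range (2 * N + 1), 1 / ((i : ℝ) + 1) - 1 ≤
      ‖shannonCLM N (N + 1 / 2)‖ := by
  -- small enough that the sampling error `(2N + 1) · Nδ / 2π` of the window stays below `1`
  set δ : ℝ := 1 / ((N : ℝ) + 1) ^ 2
  have hδ : 0 < δ := by positivity
  have hδ' : δ ≤ 2 * π := by
    have : δ ≤ 1 := div_le_one_of_le₀ (by nlinarith [N.cast_nonneg (α := ℝ)]) (by positivity)
    linarith [Real.pi_gt_three]
  set S := shannonSum (pwFun (window δ)) N (N + 1 / 2)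
  set M := ((1 / (2 * π) : ℝ) : ℂ) * ((∑ n ∈ Finset.Icc (-(N : ℤ)) N,
    Real.cos (π * n) * sincπ ((N + 1 / 2 : ℝ) - n) : ℝ) : ℂ)
  have hM : 1 / (2 * π ^ 2) * ∑ i ∈ Finset.range (2 * N + 1), 1 / ((i : ℝ) + 1) ≤ ‖M‖ := by
    rw [norm_mul, Complex.norm_real, Complex.norm_real, Real.norm_of_nonneg (by positivity),
      Real.norm_eq_abs]
    calc _ = 1 / (2 * π) * (1 / π * ∑ i ∈ Finset.range (2 * N + 1), 1 / ((i : ℝ) + 1)) := by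
          field_simp
      _ ≤ _ := by
          gcongr
          rw [div_mul_eq_mul_div, one_mul, div_le_iff₀' Real.pi_pos]
          exact sum_range_inv_succ_le_abs_sum_cos_mul_sincπ N
  have herr : ‖S - M‖ ≤ 1 := by
    refine (norm_shannonSum_window_sub_le hδ hδ' N _).trans ?_
    rw [mul_div_assoc', div_le_one (by positivity)]
    have : (2 * N + 1) * (δ * N) ≤ 2 := by
      rw [show (2 * N + 1) * (δ * N) = (2 * (N : ℝ) ^ 2 + N) / (N + 1) ^ 2 by ring,
        div_le_iff₀ (by positivity)]
      nlinarith [N.cast_nonneg (α := ℝ)]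
    nlinarith [Real.pi_gt_three]
  calc _ ≤ ‖M‖ - ‖S - M‖ := by linarith
    _ ≤ ‖S‖ := by linarith [norm_sub_norm_le M S, norm_sub_rev S M]
    _ = ‖shannonCLM N (N + 1 / 2) (window δ)‖ := by rw [shannonCLM_apply]
    _ ≤ ‖shannonCLM N (N + 1 / 2)‖ := by
        simpa [norm_window hδ hδ'] using (shannonCLM N (N + 1 / 2)).le_opNorm (window δ)

theorem tendsto_iSup_nnnorm_shannonCLM :
    Tendsto (fun N => ⨆ t, (‖shannonCLM N t‖₊ : ℝ≥0∞)) atTop (𝓝 ⊤) := by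
  have hharmonic : Tendsto (fun N : ℕ => ∑ i ∈ Finset.range (2 * N + 1), 1 / ((i : ℝ) + 1))
      atTop atTop :=
    Real.tendsto_sum_range_one_div_nat_succ_atTop.comp
      (tendsto_atTop_mono (fun N => (by omega : N ≤ 2 * N + 1)) tendsto_id)
  have hbound := (hharmonic.const_mul_atTop (by positivity : (0 : ℝ) < 1 / (2 * π ^ 2))).atTop_add
    (tendsto_const_nhds (x := (-1 : ℝ)))
  refine tendsto_nhds_top_mono (ENNReal.tendsto_ofReal_atTop.comp hbound)
    (Eventually.of_forall fun N => ?_)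
  refine le_trans ?_ (le_iSup _ ((N : ℝ) + 1 / 2))
  rw [← ENNReal.ofReal_coe_nnreal, coe_nnnorm]
  exact ENNReal.ofReal_le_ofReal (by simpa [sub_eq_add_neg] using le_opNorm_shannonCLM N)

theorem iSup_nnnorm_pwFun_ne_top (g : PW1Space) : ⨆ t : ℝ, (‖pwFun g t‖₊ : ℝ≥0∞) ≠ ⊤ := by
  refine ne_top_of_le_ne_top (ENNReal.ofReal_ne_top (r := 1 / (2 * π) * ‖g‖)) (iSup_le fun t => ?_)
  rw [← ENNReal.ofReal_coe_nnreal, coe_nnnorm]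
  exact ENNReal.ofReal_le_ofReal (norm_pwFun_le g t)

theorem eventually_residual_limsup_shannonSum_eq_top {N : ℕ → ℕ} (hN : Tendsto N atTop atTop) :
    ∀ᶠ g in residual PW1Space,
      limsup (fun k => ⨆ t : ℝ, (‖shannonSum (pwFun g) (N k) t‖₊ : ℝ≥0∞)) atTop = ⊤ := by
  have hT : limsup (fun k => ⨆ t, (‖shannonCLM (N k) t‖₊ : ℝ≥0∞)) atTop = ⊤ :=
    (tendsto_iSup_nnnorm_shannonCLM.comp hN).limsup_eq
  simpa only [shannonCLM_apply] using banach_steinhaus_residual_limsup hT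

end PaleyWiener

/-- For every strictly increasing sequence `N_1 < N_2 < ⋯` of
naturals there is a residual set `D` in the Banach space `PW^1_π` such that
`limsup_k sup_{t∈ℝ} |(S_{N_k} f)(t)| = ∞` for every `f ∈ D`.  In particular no
universal subsequence yields uniform convergence on `ℝ` for every `f ∈ PW^1_π`. -/
theorem shannon_divergence_residual_along_subsequences
    (Nk : ℕ → ℕ) (hNk : StrictMono Nk) :
    (∃ D : Set PW1Space, D ∈ residual PW1Space ∧ ∀ g ∈ D,
        limsup (fun k : ℕ => ⨆ t : ℝ, (‖shannonSum (pwFun g) (Nk k) t‖₊ : ℝ≥0∞)) atTop = ⊤) ∧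
    ¬ ∃ Mk : ℕ → ℕ, StrictMono Mk ∧ ∀ g : PW1Space,
        Tendsto (fun k : ℕ => ⨆ t : ℝ, (‖pwFun g (t : ℂ) - shannonSum (pwFun g) (Mk k) t‖₊ : ℝ≥0∞))
          atTop (𝓝 0) := by
  refine ⟨⟨_, PaleyWiener.eventually_residual_limsup_shannonSum_eq_top hNk.tendsto_atTop,
    fun g hg => hg⟩, ?_⟩
  rintro ⟨Mk, hMk, hconv⟩
  obtain ⟨g, hg⟩ := (dense_of_mem_residual
    (PaleyWiener.eventually_residual_limsup_shannonSum_eq_top hMk.tendsto_atTop)).nonempty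
  exact limsup_iSup_nnnorm_ne_top_of_tendsto (PaleyWiener.iSup_nnnorm_pwFun_ne_top g) (hconv g) hg
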